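/- arXiv:1511.09311 — 7 statements merged into one kernel-verified Lean document; each statement's English description precedes it below -/
import Mathlib

section
/- Let α, β, η > 0 be real constants and n ≥ 1 an integer with αβ > n. Then there exist positive constants C₅ and C₆ (depending only on α, β, η, n) such that for all reals A, B > 0 satisfying A^{1/α} ≤ C₅ B, one has ∫₀² r^{n-1} / ((A + r^α)^β (B + r)^η) dr ≤ C₆ / (A^{β - n/α} B^η). -/
open MeasureTheory Real

theorem stmt2 (α β η : ℝ) (n : ℕ) (hα : 0 < α) (hβ : 0 < β) (hη : 0 < η)
    (hn : 1 ≤ n) (hαβ : (n : ℝ) < α * β) :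
    ∃ C₅ C₆ : ℝ, 0 < C₅ ∧ 0 < C₆ ∧ ∀ A B : ℝ, 0 < A → 0 < B →
      A ^ (1 / α) ≤ C₅ * B →
      ∫ r in Set.Ioo (0:ℝ) 2,
          r ^ ((n : ℝ) - 1) / ((A + r ^ α) ^ β * (B + r) ^ η)
        ≤ C₆ / (A ^ (β - (n : ℝ) / α) * B ^ η) := by
  have hn0 : (0:ℝ) < n := by exact_mod_cast Nat.lt_of_lt_of_le Nat.zero_lt_one hn
  have hn1 : (1:ℝ) ≤ n := by exact_mod_cast hn
  have hd : (0:ℝ) < α * β - n := by linarith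
  refine ⟨1, 1/(n:ℝ) + 1/(α*β - (n:ℝ)), one_pos, by positivity, ?_⟩
  intro A B hA hB _
  set a : ℝ := A ^ (1/α) with ha_def
  have ha : 0 < a := rpow_pos_of_pos hA _
  have haA : a ^ α = A := by
    rw [ha_def, ← rpow_mul hA.le, one_div, inv_mul_cancel₀ hα.ne', rpow_one]
  set f : ℝ → ℝ := fun r => r ^ ((n : ℝ) - 1) / ((A + r ^ α) ^ β * (B + r) ^ η) with hf_def
  set K : ℝ := A ^ ((n:ℝ)/α - β) / B ^ η with hK_def
  have hK : 0 < K := by positivity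
  -- continuity and integrability of f on [0,2]
  have hcont : ContinuousOn f (Set.Icc 0 2) := by
    apply ContinuousOn.div
    · exact ContinuousOn.rpow_const continuousOn_id (fun x _ => Or.inr (by linarith))
    · apply ContinuousOn.mul
      · exact ContinuousOn.rpow_const
          (continuousOn_const.add (ContinuousOn.rpow_const continuousOn_id
            (fun x _ => Or.inr hα.le)))
          (fun x hx => Or.inl (by have : (0:ℝ) ≤ x ^ α := rpow_nonneg hx.1 α; positivity))
      · exact ContinuousOn.rpow_const (continuousOn_const.add continuousOn_id)
          (fun x hx => Or.inl (by have := hx.1; positivity))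
    · intro x hx
      have h1 : (0:ℝ) ≤ x ^ α := rpow_nonneg hx.1 α
      have h2 : (0:ℝ) ≤ x := hx.1
      positivity
  have hfint : IntegrableOn f (Set.Ioo 0 2) :=
    (hcont.integrableOn_compact isCompact_Icc).mono_set Set.Ioo_subset_Icc_self
  -- main bound on Ioo 0 c, for 0 < c ≤ min a 2
  have h1 : ∀ c : ℝ, 0 < c → c ≤ 2 → c ≤ a →
      ∫ r in Set.Ioo (0:ℝ) c, f r ≤ (1/(n:ℝ)) * K := by
    intro c hc hc2 hca
    have hg1 : IntegrableOn (fun r : ℝ => r ^ ((n:ℝ)-1) / (A ^ β * B ^ η)) (Set.Ioo 0 c) := by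
      have := (intervalIntegral.intervalIntegrable_rpow' (a := 0) (b := c)
        (r := (n:ℝ)-1) (by linarith)).div_const (A ^ β * B ^ η)
      rw [intervalIntegrable_iff_integrableOn_Ioc_of_le hc.le] at this
      exact this.mono_set Set.Ioo_subset_Ioc_self
    calc ∫ r in Set.Ioo (0:ℝ) c, f r
        ≤ ∫ r in Set.Ioo (0:ℝ) c, r ^ ((n:ℝ)-1) / (A ^ β * B ^ η) := by
          apply setIntegral_mono_on
            (hfint.mono_set (Set.Ioo_subset_Ioo le_rfl hc2)) hg1 measurableSet_Ioo
          intro r hr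
          have hr0 : 0 < r := hr.1
          apply div_le_div₀ (by positivity) le_rfl (by positivity)
          apply mul_le_mul
          · exact rpow_le_rpow hA.le (by have := rpow_nonneg hr0.le α; linarith) hβ.le
          · exact rpow_le_rpow hB.le (by linarith) hη.le
          · positivity
          · positivity
      _ = (c ^ (n:ℝ) / (n:ℝ)) / (A ^ β * B ^ η) := by
          rw [← integral_Ioc_eq_integral_Ioo, ← intervalIntegral.integral_of_le hc.le,
            intervalIntegral.integral_div, integral_rpow (Or.inl (by linarith)),
            sub_add_cancel, zero_rpow (by positivity), sub_zero]
      _ ≤ (a ^ (n:ℝ) / (n:ℝ)) / (A ^ β * B ^ η) := by gcongr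
      _ = (1/(n:ℝ)) * K := by
          rw [hK_def, ha_def, ← rpow_mul hA.le, rpow_sub hA,
            show (1/α)*(n:ℝ) = (n:ℝ)/α by ring]
          have hb1 : A ^ β ≠ 0 := by positivity
          have hb2 : B ^ η ≠ 0 := by positivity
          field_simp
  -- the tail bound when a < 2
  have h2 : a < 2 → ∫ r in Set.Ico a 2, f r ≤ (1/(α*β-(n:ℝ))) * K := by
    intro ha2
    have h0u : (0:ℝ) ∉ Set.uIcc a 2 := Set.notMem_uIcc_of_lt ha two_pos
    have hg2 : IntegrableOn (fun r : ℝ => r ^ ((n:ℝ)-1-α*β) / B ^ η) (Set.Ioc a 2) := by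
      have := (intervalIntegral.intervalIntegrable_rpow (μ := volume) (a := a) (b := 2)
        (r := (n:ℝ)-1-α*β) (Or.inr h0u)).div_const (B ^ η)
      rwa [intervalIntegrable_iff_integrableOn_Ioc_of_le ha2.le] at this
    have ha' : a ^ ((n:ℝ)-α*β) = A ^ ((n:ℝ)/α - β) := by
      rw [ha_def, ← rpow_mul hA.le, show (1/α)*((n:ℝ)-α*β) = (n:ℝ)/α - β by
        field_simp]
    rw [integral_Ico_eq_integral_Ioo]
    calc ∫ r in Set.Ioo a 2, f r
        ≤ ∫ r in Set.Ioo a 2, r ^ ((n:ℝ)-1-α*β) / B ^ η := by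
          apply setIntegral_mono_on
            (hfint.mono_set (Set.Ioo_subset_Ioo ha.le le_rfl))
            (hg2.mono_set Set.Ioo_subset_Ioc_self) measurableSet_Ioo
          intro r hr
          have hr0 : 0 < r := ha.trans hr.1
          have hkey : r ^ (α*β) ≤ (A + r ^ α) ^ β := by
            rw [show r ^ (α*β) = (r ^ α) ^ β by rw [← rpow_mul hr0.le]]
            exact rpow_le_rpow (rpow_nonneg hr0.le α) (by linarith) hβ.le
          have hrab : (0:ℝ) < r ^ (α*β) := rpow_pos_of_pos hr0 _
          calc f r ≤ r ^ ((n:ℝ)-1) / (r ^ (α*β) * B ^ η) := by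
                apply div_le_div₀ (by positivity) le_rfl (by positivity)
                apply mul_le_mul hkey (rpow_le_rpow hB.le (by linarith) hη.le)
                  (by positivity) (by positivity)
            _ = r ^ ((n:ℝ)-1-α*β) / B ^ η := by
                rw [rpow_sub hr0 ((n:ℝ)-1) (α*β), div_div]
      _ = ((2:ℝ) ^ ((n:ℝ)-α*β) - a ^ ((n:ℝ)-α*β)) / ((n:ℝ)-α*β) / B ^ η := by
          rw [← integral_Ioc_eq_integral_Ioo, ← intervalIntegral.integral_of_le ha2.le,
            intervalIntegral.integral_div,
            integral_rpow (Or.inr ⟨by intro h; rw [sub_eq_iff_eq_add] at h; nlinarith, h0u⟩),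
            show (n:ℝ)-1-α*β+1 = (n:ℝ)-α*β by ring]
      _ = (a ^ ((n:ℝ)-α*β) - (2:ℝ) ^ ((n:ℝ)-α*β)) / (α*β-(n:ℝ)) / B ^ η := by
          rw [show (n:ℝ)-α*β = -(α*β-(n:ℝ)) by ring, div_neg, ← neg_div, neg_sub]
      _ ≤ a ^ ((n:ℝ)-α*β) / (α*β-(n:ℝ)) / B ^ η := by
          have h2p : (0:ℝ) < (2:ℝ) ^ ((n:ℝ)-α*β) := by positivity
          gcongr
          linarith
      _ = (1/(α*β-(n:ℝ))) * K := by
          rw [ha', hK_def]; ring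
  -- final constant identity
  have hC : (1/(n:ℝ) + 1/(α*β-(n:ℝ))) / (A ^ (β-(n:ℝ)/α) * B ^ η)
      = (1/(n:ℝ)) * K + (1/(α*β-(n:ℝ))) * K := by
    rw [hK_def, show β - (n:ℝ)/α = -((n:ℝ)/α - β) by ring, rpow_neg hA.le]
    have hb1 : A ^ ((n:ℝ)/α - β) ≠ 0 := by positivity
    have hb2 : B ^ η ≠ 0 := by positivity
    have hb3 : (n:ℝ) ≠ 0 := hn0.ne'
    have hb4 : α*β-(n:ℝ) ≠ 0 := hd.ne'
    field_simp
  rw [hC]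
  rcases le_or_gt 2 a with h2a | ha2
  · have := h1 2 two_pos le_rfl h2a
    have hpos : 0 ≤ (1/(α*β-(n:ℝ))) * K := by positivity
    linarith
  · rw [← Set.Ioo_union_Ico_eq_Ioo ha ha2.le,
      setIntegral_union (Set.disjoint_left.mpr fun x hx hx' => absurd hx'.1 (not_le.mpr hx.2))
        measurableSet_Ico (hfint.mono_set (Set.Ioo_subset_Ioo le_rfl ha2.le))
        (hfint.mono_set fun x hx => ⟨ha.trans_le hx.1, hx.2⟩)]
    exact add_le_add (h1 a ha ha2.le le_rfl) (h2 ha2)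
end

section
/- Let α, β, η > 0 be real constants and n ≥ 1 an integer with αβ = n. Then there exist positive constants C₅ and C₆ such that for all reals A, B > 0 satisfying A^{1/α} ≤ C₅ B, one has ∫₀² r^{n-1} / ((A + r^α)^β (B + r)^η) dr ≤ (C₆ / B^η) · log(1 + Bⁿ A^{-n/α}). -/
open MeasureTheory Real Set

set_option maxHeartbeats 1000000

theorem stmt3 (α β η : ℝ) (n : ℕ) (hα : 0 < α) (hβ : 0 < β) (hη : 0 < η)
    (hn : 1 ≤ n) (hαβ : α * β = (n : ℝ)) :
    ∃ C₅ C₆ : ℝ, 0 < C₅ ∧ 0 < C₆ ∧ ∀ A B : ℝ, 0 < A → 0 < B →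
      A ^ (1 / α) ≤ C₅ * B →
      ∫ r in Set.Ioo (0:ℝ) 2,
          r ^ ((n : ℝ) - 1) / ((A + r ^ α) ^ β * (B + r) ^ η)
        ≤ (C₆ / B ^ η) * Real.log (1 + B ^ (n : ℝ) * A ^ (-(n : ℝ) / α)) := by
  have hn1 : (1:ℝ) ≤ (n:ℝ) := by exact_mod_cast hn
  have hn0 : (0:ℝ) < (n:ℝ) := by linarith
  have hnm : (0:ℝ) ≤ (n:ℝ) - 1 := by linarith
  refine ⟨1/2, 2/(n:ℝ) + 1/η, by norm_num, by positivity, ?_⟩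
  intro A B hA hB hAB
  set f : ℝ → ℝ := fun r => r ^ ((n : ℝ) - 1) / ((A + r ^ α) ^ β * (B + r) ^ η) with hf
  set t : ℝ := A ^ (1 / α) with ht
  have ht0 : 0 < t := Real.rpow_pos_of_pos hA _
  have htB : 2 * t ≤ B := by rw [ht]; linarith
  have htB' : t ≤ B := by linarith
  have hβeq : β = (n:ℝ) / α := by
    field_simp
    linarith [hαβ]
  have htn : t ^ (n:ℝ) = A ^ β := by
    rw [ht, ← Real.rpow_mul hA.le, hβeq]
    congr 1
    field_simp
  have hX : B ^ (n:ℝ) * A ^ (-(n:ℝ)/α) = (B / t) ^ (n:ℝ) := by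
    rw [Real.div_rpow hB.le ht0.le, htn, eq_div_iff (by positivity), mul_assoc,
      ← Real.rpow_add hA]
    have h0 : -(n:ℝ)/α + β = 0 := by rw [hβeq]; ring
    rw [h0, Real.rpow_zero, mul_one]
  set X : ℝ := B ^ (n:ℝ) * A ^ (-(n:ℝ)/α) with hXdef
  have hBt2 : 2 ≤ B / t := by rw [le_div_iff₀ ht0]; linarith
  have hX2 : 2 ≤ X := by
    rw [hX]
    calc (2:ℝ) = 2 ^ (1:ℝ) := (Real.rpow_one 2).symm
    _ ≤ 2 ^ (n:ℝ) := Real.rpow_le_rpow_of_exponent_le (by norm_num) hn1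
    _ ≤ (B / t) ^ (n:ℝ) := Real.rpow_le_rpow (by norm_num) hBt2 hn0.le
  set L : ℝ := Real.log (1 + X) with hL
  have hL1 : 1 ≤ L := by
    rw [hL]
    refine (Real.le_log_iff_exp_le (by linarith)).mpr ?_
    have := Real.exp_one_lt_d9
    linarith
  -- integrability of f on Ioo 0 2
  have hfi : IntegrableOn f (Set.Ioo (0:ℝ) 2) := by
    apply Integrable.mono' (g := fun _ => (2:ℝ) ^ ((n:ℝ)-1) / (A ^ β * B ^ η))
      (integrable_const _)
    · apply Measurable.aestronglyMeasurable
      fun_prop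
    · rw [ae_restrict_iff' measurableSet_Ioo]
      filter_upwards with r hr
      have hr0 : 0 < r := hr.1
      have h1 : A ^ β ≤ (A + r ^ α) ^ β :=
        Real.rpow_le_rpow hA.le (by nlinarith [Real.rpow_pos_of_pos hr0 α]) hβ.le
      have h2 : B ^ η ≤ (B + r) ^ η :=
        Real.rpow_le_rpow hB.le (by linarith) hη.le
      rw [Real.norm_eq_abs, abs_of_nonneg (by positivity)]
      apply div_le_div₀ (by positivity)
      · exact Real.rpow_le_rpow hr0.le hr.2.le hnm
      · positivity
      · exact mul_le_mul h1 h2 (by positivity) (by positivity)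
  -- the three pieces
  set S₁ : Set ℝ := Ioo (0:ℝ) 2 ∩ Iic t with hS₁
  set S₂ : Set ℝ := Ioo (0:ℝ) 2 ∩ Ioc t B with hS₂
  set S₃ : Set ℝ := Ioo (0:ℝ) 2 ∩ Ioi B with hS₃
  have hcover : Ioo (0:ℝ) 2 = S₁ ∪ (S₂ ∪ S₃) := by
    rw [hS₁, hS₂, hS₃, ← Set.inter_union_distrib_left, ← Set.inter_union_distrib_left]
    rw [Set.Ioc_union_Ioi_eq_Ioi htB', Set.Iic_union_Ioi, Set.inter_univ]
  have hm₁ : MeasurableSet S₁ := measurableSet_Ioo.inter measurableSet_Iic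
  have hm₂ : MeasurableSet S₂ := measurableSet_Ioo.inter measurableSet_Ioc
  have hm₃ : MeasurableSet S₃ := measurableSet_Ioo.inter measurableSet_Ioi
  have hd₂₃ : Disjoint S₂ S₃ := by
    apply Set.disjoint_left.mpr
    rintro r ⟨-, -, h2⟩ ⟨-, h3⟩
    simp only [mem_Ioi] at h3
    exact absurd h2 (not_le.mpr h3)
  have hd₁ : Disjoint S₁ (S₂ ∪ S₃) := by
    apply Set.disjoint_left.mpr
    rintro r ⟨-, h1⟩ (⟨-, h2, -⟩ | ⟨-, h3⟩)
    · simp only [mem_Iic] at h1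
      exact absurd h1 (not_le.mpr h2)
    · simp only [mem_Iic] at h1
      simp only [mem_Ioi] at h3
      linarith
  have hfi₁ : IntegrableOn f S₁ := hfi.mono_set Set.inter_subset_left
  have hfi₂ : IntegrableOn f S₂ := hfi.mono_set Set.inter_subset_left
  have hfi₃ : IntegrableOn f S₃ := hfi.mono_set Set.inter_subset_left
  have hsplit : ∫ r in Ioo (0:ℝ) 2, f r
      = (∫ r in S₁, f r) + ((∫ r in S₂, f r) + (∫ r in S₃, f r)) := by
    rw [hcover, setIntegral_union hd₁ (hm₂.union hm₃) hfi₁ (hfi₂.union hfi₃),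
      setIntegral_union hd₂₃ hm₃ hfi₂ hfi₃]
  set u : ℝ := (B ^ η)⁻¹ with hu
  have hu0 : 0 < u := by positivity
  -- piece 1
  have hg₁i : IntegrableOn (fun r : ℝ => r ^ ((n:ℝ)-1) * (A ^ β * B ^ η)⁻¹) (Ioc 0 t) := by
    have h := (intervalIntegral.intervalIntegrable_rpow' (a := 0) (b := t)
      (by linarith : (-1:ℝ) < (n:ℝ)-1)).mul_const ((A ^ β * B ^ η)⁻¹)
    rwa [intervalIntegrable_iff_integrableOn_Ioc_of_le ht0.le] at h
  have h₁ : ∫ r in S₁, f r ≤ u / n := by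
    have hsub₁ : S₁ ⊆ Ioc 0 t := fun r hr => ⟨hr.1.1, hr.2⟩
    have step1 : ∫ r in S₁, f r ≤ ∫ r in S₁, r ^ ((n:ℝ)-1) * (A ^ β * B ^ η)⁻¹ := by
      apply setIntegral_mono_on hfi₁ (hg₁i.mono_set hsub₁) hm₁
      intro r hr
      have hr0 : 0 < r := hr.1.1
      have h1 : A ^ β ≤ (A + r ^ α) ^ β :=
        Real.rpow_le_rpow hA.le (by nlinarith [Real.rpow_pos_of_pos hr0 α]) hβ.le
      have h2 : B ^ η ≤ (B + r) ^ η :=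
        Real.rpow_le_rpow hB.le (by linarith) hη.le
      rw [hf, ← div_eq_mul_inv]
      apply div_le_div₀ (by positivity) le_rfl (by positivity)
      exact mul_le_mul h1 h2 (by positivity) (by positivity)
    have step2 : ∫ r in S₁, r ^ ((n:ℝ)-1) * (A ^ β * B ^ η)⁻¹
        ≤ ∫ r in Ioc 0 t, r ^ ((n:ℝ)-1) * (A ^ β * B ^ η)⁻¹ := by
      apply setIntegral_mono_set hg₁i ?_ (HasSubset.Subset.eventuallyLE hsub₁)
      filter_upwards [ae_restrict_mem measurableSet_Ioc] with r hr
      have h0 : 0 < r := hr.1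
      simp only [Pi.zero_apply]
      positivity
    have step3 : ∫ r in Ioc 0 t, r ^ ((n:ℝ)-1) * (A ^ β * B ^ η)⁻¹ = u / n := by
      rw [← intervalIntegral.integral_of_le ht0.le, intervalIntegral.integral_mul_const,
        integral_rpow (Or.inl (by linarith : (-1:ℝ) < (n:ℝ)-1))]
      have he : (n:ℝ) - 1 + 1 = (n:ℝ) := by ring
      rw [he, Real.zero_rpow hn0.ne', htn, sub_zero, hu]
      have hAβ : (0:ℝ) < A ^ β := by positivity
      have hBη : (0:ℝ) < B ^ η := by positivity
      field_simp
    linarith [step1, step2.trans_eq step3]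
  -- piece 2
  have hg₂i : IntegrableOn (fun r : ℝ => r⁻¹ * (B ^ η)⁻¹) (Ioc t B) := by
    have hc : ContinuousOn (fun r : ℝ => r⁻¹ * (B ^ η)⁻¹) (Icc t B) := by
      apply ContinuousOn.mul _ continuousOn_const
      exact continuousOn_id.inv₀ (fun x hx => ne_of_gt (lt_of_lt_of_le ht0 hx.1))
    exact (hc.integrableOn_Icc).mono_set Set.Ioc_subset_Icc_self
  have h₂ : ∫ r in S₂, f r ≤ u * Real.log (B / t) := by
    have hsub₂ : S₂ ⊆ Ioc t B := fun r hr => hr.2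
    have step1 : ∫ r in S₂, f r ≤ ∫ r in S₂, r⁻¹ * (B ^ η)⁻¹ := by
      apply setIntegral_mono_on hfi₂ (hg₂i.mono_set hsub₂) hm₂
      intro r hr
      have hr0 : 0 < r := hr.1.1
      have h1 : r ^ (n:ℝ) ≤ (A + r ^ α) ^ β := by
        calc r ^ (n:ℝ) = (r ^ α) ^ β := by rw [← Real.rpow_mul hr0.le, hαβ]
        _ ≤ (A + r ^ α) ^ β := Real.rpow_le_rpow (by positivity) (by linarith) hβ.le
      have h2 : B ^ η ≤ (B + r) ^ η :=
        Real.rpow_le_rpow hB.le (by linarith) hη.le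
      have key : r ^ ((n:ℝ)-1) / r ^ (n:ℝ) = r⁻¹ := by
        rw [← Real.rpow_sub hr0]
        norm_num [Real.rpow_neg_one]
      calc f r ≤ r ^ ((n:ℝ)-1) / (r ^ (n:ℝ) * B ^ η) := by
            rw [hf]
            apply div_le_div₀ (by positivity) le_rfl (by positivity)
            exact mul_le_mul h1 h2 (by positivity) (by positivity)
      _ = r⁻¹ * (B ^ η)⁻¹ := by
            rw [div_mul_eq_div_div, key, div_eq_mul_inv]
    have step2 : ∫ r in S₂, r⁻¹ * (B ^ η)⁻¹ ≤ ∫ r in Ioc t B, r⁻¹ * (B ^ η)⁻¹ := by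
      apply setIntegral_mono_set hg₂i ?_ (HasSubset.Subset.eventuallyLE hsub₂)
      filter_upwards [ae_restrict_mem measurableSet_Ioc] with r hr
      have h0 : 0 < r := ht0.trans hr.1
      simp only [Pi.zero_apply]
      positivity
    have step3 : ∫ r in Ioc t B, r⁻¹ * (B ^ η)⁻¹ = Real.log (B / t) * u := by
      rw [← intervalIntegral.integral_of_le htB', intervalIntegral.integral_mul_const,
        integral_inv (Set.notMem_uIcc_of_lt ht0 hB), hu]
    have := step2.trans_eq step3
    linarith [step1, this]
  -- piece 3
  have hg₃i : IntegrableOn (fun r : ℝ => r ^ (-η - 1)) (Ioi B) :=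
    integrableOn_Ioi_rpow_of_lt (by linarith) hB
  have h₃ : ∫ r in S₃, f r ≤ u / η := by
    have hsub₃ : S₃ ⊆ Ioi B := fun r hr => hr.2
    have step1 : ∫ r in S₃, f r ≤ ∫ r in S₃, r ^ (-η - 1) := by
      apply setIntegral_mono_on hfi₃ (hg₃i.mono_set hsub₃) hm₃
      intro r hr
      have hrB : B < r := hr.2
      have hr0 : 0 < r := hB.trans hrB
      have h1 : r ^ (n:ℝ) ≤ (A + r ^ α) ^ β := by
        calc r ^ (n:ℝ) = (r ^ α) ^ β := by rw [← Real.rpow_mul hr0.le, hαβ]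
        _ ≤ (A + r ^ α) ^ β := Real.rpow_le_rpow (by positivity) (by linarith) hβ.le
      have h2 : r ^ η ≤ (B + r) ^ η :=
        Real.rpow_le_rpow hr0.le (by linarith) hη.le
      calc f r ≤ r ^ ((n:ℝ)-1) / (r ^ (n:ℝ) * r ^ η) := by
            rw [hf]
            apply div_le_div₀ (by positivity) le_rfl (by positivity)
            exact mul_le_mul h1 h2 (by positivity) (by positivity)
      _ = r ^ (-η - 1) := by
            rw [← Real.rpow_add hr0, ← Real.rpow_sub hr0]
            congr 1
            ring
    have step2 : ∫ r in S₃, r ^ (-η - 1) ≤ ∫ r in Ioi B, r ^ (-η - 1) := by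
      apply setIntegral_mono_set hg₃i ?_ (HasSubset.Subset.eventuallyLE hsub₃)
      filter_upwards [ae_restrict_mem measurableSet_Ioi] with r hr
      have h0 : 0 < r := hB.trans hr
      simp only [Pi.zero_apply]
      positivity
    have step3 : ∫ r in Ioi B, r ^ (-η - 1) = u / η := by
      rw [integral_Ioi_rpow_of_lt (by linarith) hB]
      have he : -η - 1 + 1 = -η := by ring
      rw [he, Real.rpow_neg hB.le, hu]
      rw [neg_div_neg_eq]
    linarith [step1, step2.trans_eq step3]
  -- combine
  have hlogX : Real.log X = (n:ℝ) * Real.log (B / t) := by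
    rw [hX, Real.log_rpow (by linarith : (0:ℝ) < B / t)]
  have hXleL : Real.log X ≤ L := Real.log_le_log (by linarith) (by linarith)
  have hlogn : Real.log (B / t) ≤ L / n := by
    rw [le_div_iff₀ hn0, mul_comm]
    rw [← hlogX]
    exact hXleL
  have hlognn : 0 ≤ Real.log (B / t) := Real.log_nonneg (by linarith)
  have c1 : u / n ≤ u * (L / n) := by
    rw [← mul_div_assoc]
    gcongr
    exact le_mul_of_one_le_right hu0.le hL1
  have c2 : u * Real.log (B / t) ≤ u * (L / n) := mul_le_mul_of_nonneg_left hlogn hu0.le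
  have c3 : u / η ≤ u * (L / η) := by
    rw [← mul_div_assoc]
    gcongr
    exact le_mul_of_one_le_right hu0.le hL1
  have hfin : (2/(n:ℝ) + 1/η) / B ^ η * L = u * (L / n) + (u * (L / n) + u * (L / η)) := by
    rw [div_eq_mul_inv, ← hu]
    ring
  calc ∫ r in Ioo (0:ℝ) 2, f r
      = (∫ r in S₁, f r) + ((∫ r in S₂, f r) + (∫ r in S₃, f r)) := hsplit
  _ ≤ u / n + (u * Real.log (B / t) + u / η) := add_le_add h₁ (add_le_add h₂ h₃)
  _ ≤ u * (L / n) + (u * (L / n) + u * (L / η)) := add_le_add c1 (add_le_add c2 c3)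
  _ = (2/(n:ℝ) + 1/η) / B ^ η * L := hfin.symm
end

section
/- Let 0 < λ₁ ≤ λ₂ ≤ … ≤ λ_m be reals, let Q > 0, and suppose Σ_{i=1}^{l-1} λ_i < Q ≤ Σ_{i=1}^{l} λ_i for some 1 ≤ l ≤ m. Define ζ = min{ m, (Q + Σ_{i=1}^j (λ_j - λ_i)) / λ_j : 1 ≤ j ≤ m }. Then ζ = (Q + Σ_{i=1}^l (λ_l - λ_i)) / λ_l and ζ ∈ (l-1, l]. -/
theorem stmt7 (m : ℕ) (hm : 1 ≤ m) (lam : ℕ → ℝ) (Q : ℝ)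
    (hpos : ∀ i, 1 ≤ i → i ≤ m → 0 < lam i)
    (hmono : ∀ i j, 1 ≤ i → i ≤ j → j ≤ m → lam i ≤ lam j)
    (hQ : 0 < Q) (l : ℕ) (hl1 : 1 ≤ l) (hlm : l ≤ m)
    (hQl : ∑ i ∈ Finset.Icc 1 (l - 1), lam i < Q)
    (hQu : Q ≤ ∑ i ∈ Finset.Icc 1 l, lam i)
    (hne : (Finset.Icc 1 m).Nonempty)
    (ζ : ℝ)
    (hζ : ζ = min (m : ℝ) ((Finset.Icc 1 m).inf' hne
        (fun j => (Q + ∑ i ∈ Finset.Icc 1 j, (lam j - lam i)) / lam j))) :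
    ζ = (Q + ∑ i ∈ Finset.Icc 1 l, (lam l - lam i)) / lam l ∧
      (l : ℝ) - 1 < ζ ∧ ζ ≤ (l : ℝ) := by
  set S : ℕ → ℝ := fun j => ∑ i ∈ Finset.Icc 1 j, lam i with hS
  set F : ℕ → ℝ := fun j => (Q + (j : ℝ) * lam j - S j) / lam j with hF
  have hfeq : ∀ j, (Q + ∑ i ∈ Finset.Icc 1 j, (lam j - lam i)) / lam j = F j := by
    intro j
    simp only [hF, hS]
    rw [Finset.sum_sub_distrib, Finset.sum_const, Nat.card_Icc, Nat.add_sub_cancel,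
      nsmul_eq_mul]
    ring
  have Smono : ∀ a b, a ≤ b → b ≤ m → S a ≤ S b := by
    intro a b hab hbm
    apply Finset.sum_le_sum_of_subset_of_nonneg (Finset.Icc_subset_Icc_right hab)
    intro i hi _
    simp only [Finset.mem_Icc] at hi
    exact (hpos i hi.1 (le_trans hi.2 hbm)).le
  have hSl : S l = S (l - 1) + lam l := by
    have h : l - 1 + 1 = l := by omega
    simp only [hS]
    rw [← h, Finset.sum_Icc_succ_top (by omega)]
    simp
  have hSlQ : S (l - 1) < Q := hQl
  have hQSl : Q ≤ S l := hQu
  have hlamll : 0 < lam l := hpos l hl1 hlm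
  have step_up : ∀ j, l ≤ j → j + 1 ≤ m → F j ≤ F (j + 1) := by
    intro j hj hjm
    have h1 : 0 < lam j := hpos j (le_trans hl1 hj) (by omega)
    have h2 : 0 < lam (j + 1) := hpos _ (by omega) hjm
    have h3 : lam j ≤ lam (j + 1) := hmono _ _ (le_trans hl1 hj) (by omega) hjm
    have h4 : Q ≤ S j := le_trans hQSl (Smono l j hj (by omega))
    have h5 : S (j + 1) = S j + lam (j + 1) := Finset.sum_Icc_succ_top (by omega) lam
    simp only [hF]
    rw [div_le_div_iff₀ h1 h2, h5]
    push_cast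
    nlinarith [mul_nonneg (by linarith : (0:ℝ) ≤ S j - Q) (by linarith : (0:ℝ) ≤ lam (j+1) - lam j)]
  have step_down : ∀ j, 1 ≤ j → j + 1 ≤ l → F (j + 1) ≤ F j := by
    intro j h1j hjl
    have h1 : 0 < lam j := hpos j h1j (by omega)
    have h2 : 0 < lam (j + 1) := hpos _ (by omega) (by omega)
    have h3 : lam j ≤ lam (j + 1) := hmono _ _ h1j (by omega) (by omega)
    have h4 : S j ≤ Q := le_of_lt (lt_of_le_of_lt (Smono j (l - 1) (by omega) (by omega)) hSlQ)
    have h5 : S (j + 1) = S j + lam (j + 1) := Finset.sum_Icc_succ_top (by omega) lam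
    simp only [hF]
    rw [div_le_div_iff₀ h2 h1, h5]
    push_cast
    nlinarith [mul_nonneg (by linarith : (0:ℝ) ≤ Q - S j) (by linarith : (0:ℝ) ≤ lam (j+1) - lam j)]
  have up : ∀ j, l ≤ j → j ≤ m → F l ≤ F j := by
    intro j
    induction j with
    | zero => intro h _; omega
    | succ n ih =>
      intro h1 h2
      rcases Nat.lt_or_ge l (n + 1) with h | h
      · exact le_trans (ih (by omega) (by omega)) (step_up n (by omega) h2)
      · have : l = n + 1 := by omega
        rw [this]
  have down : ∀ d j, j + d = l → 1 ≤ j → F l ≤ F j := by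
    intro d
    induction d with
    | zero => intro j hj _; rw [show j = l by omega]
    | succ n ih =>
      intro j hj h1
      exact le_trans (ih (j + 1) (by omega) (by omega)) (step_down j h1 (by omega))
  have hmin : ∀ j ∈ Finset.Icc 1 m, F l ≤ F j := by
    intro j hj
    simp only [Finset.mem_Icc] at hj
    rcases Nat.lt_or_ge j l with h | h
    · exact down (l - j) j (by omega) hj.1
    · exact up j h hj.2
  have hFll : F l ≤ (l : ℝ) := by
    simp only [hF]
    rw [div_le_iff₀ hlamll]
    linarith
  have hFlg : (l : ℝ) - 1 < F l := by
    simp only [hF]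
    rw [lt_div_iff₀ hlamll]
    nlinarith [hSl, hSlQ]
  have hinf : (Finset.Icc 1 m).inf' hne
      (fun j => (Q + ∑ i ∈ Finset.Icc 1 j, (lam j - lam i)) / lam j) = F l := by
    apply le_antisymm
    · have hlmem : l ∈ Finset.Icc 1 m := by simp [Finset.mem_Icc]; omega
      have := Finset.inf'_le (fun j => (Q + ∑ i ∈ Finset.Icc 1 j, (lam j - lam i)) / lam j) hlmem
      rwa [hfeq] at this
    · apply Finset.le_inf'
      intro j hj
      rw [hfeq]
      exact hmin j hj
  have hFm : F l ≤ (m : ℝ) := le_trans hFll (by exact_mod_cast hlm)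
  have hζF : ζ = F l := by rw [hζ, hinf, min_eq_right hFm]
  refine ⟨?_, ?_, ?_⟩
  · rw [hζF, hfeq]
  · rw [hζF]; exact hFlg
  · rw [hζF]; exact hFll
end

section
/- Let 0 < λ₁ ≤ … ≤ λ_m < 1 be reals, let ã₁ > ã₂ > … > ã_p > 1 be reals, and let d̃₁, …, d̃_p be positive integers. Suppose Σ_{k=1}^p ã_k d̃_k ≤ Σ_{i=1}^m λ_i. Define κ = min over 1 ≤ j ≤ m of (Σ_{k=1}^p ã_k d̃_k + Σ_{i=1}^j (λ_j - λ_i)) / λ_j and over 1 ≤ l ≤ p of Σ_{j=1}^l (ã_j/ã_l) d̃_j + Σ_{j=l+1}^p d̃_j + Σ_{i=1}^m (1 - λ_i/ã_l). Then κ = min{ (Σ_{k=1}^p ã_k d̃_k + Σ_{i=1}^j (λ_j - λ_i)) / λ_j : 1 ≤ j ≤ m }. -/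
/-!
Compare the `j = m` range term with each graph term `l`. After multiplying the graph term by
`ã_l`, the weights `ã_j` with `j > l` may be raised to `ã_l`, which bounds it below by
`m + (S - Λ)/ã_l`, where `S = Σ ã_k d̃_k` and `Λ = Σ λ_i`; the range term equals `m + (S - Λ)/λ_m`.
Since `S - Λ ≤ 0` and `λ_m < 1 < ã_l`, the latter is the smaller.
-/

open Finset

lemma sum_Icc_one_mul_le_of_le (a d : ℕ → ℝ) {l p : ℕ} (hlp : l ≤ p)
    (ha : ∀ j ∈ Icc (l + 1) p, a j ≤ a l) (hd : ∀ j ∈ Icc (l + 1) p, 0 ≤ d j) :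
    ∑ k ∈ Icc 1 p, a k * d k ≤ ∑ j ∈ Icc 1 l, a j * d j + a l * ∑ j ∈ Icc (l + 1) p, d j := by
  have hsplit : ∑ k ∈ Icc 1 p, a k * d k
      = ∑ j ∈ Icc 1 l, a j * d j + ∑ j ∈ Icc (l + 1) p, a j * d j := by
    have hIcc (n : ℕ) : Icc 1 n = Ioc 0 n := Icc_add_one_left_eq_Ioc 0 n
    rw [hIcc, hIcc, Icc_add_one_left_eq_Ioc, sum_Ioc_consecutive _ (Nat.zero_le l) hlp]
  rw [hsplit, mul_sum]
  exact add_le_add_right (sum_le_sum fun j hj => mul_le_mul_of_nonneg_right (ha j hj) (hd j hj)) _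

lemma sum_Icc_one_sub (c : ℝ) (f : ℕ → ℝ) (m : ℕ) :
    ∑ i ∈ Icc 1 m, (c - f i) = m * c - ∑ i ∈ Icc 1 m, f i := by
  simp [sum_sub_distrib]

lemma add_div_le_graph_term (a d lam : ℕ → ℝ) {l p : ℕ} (m : ℕ) (hlp : l ≤ p) (hal : 0 < a l)
    (ha : ∀ j ∈ Icc (l + 1) p, a j ≤ a l) (hd : ∀ j ∈ Icc (l + 1) p, 0 ≤ d j) :
    m + (∑ k ∈ Icc 1 p, a k * d k - ∑ i ∈ Icc 1 m, lam i) / a l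
      ≤ ∑ j ∈ Icc 1 l, a j / a l * d j + ∑ j ∈ Icc (l + 1) p, d j
        + ∑ i ∈ Icc 1 m, (1 - lam i / a l) := by
  have hhead : ∑ j ∈ Icc 1 l, a j / a l * d j = (∑ j ∈ Icc 1 l, a j * d j) / a l := by
    rw [sum_div]
    exact sum_congr rfl fun j _ => div_mul_eq_mul_div _ _ _
  rw [hhead, sum_Icc_one_sub, ← sum_div, mul_one, sub_div]
  have hweights : (∑ k ∈ Icc 1 p, a k * d k) / a l
      ≤ (∑ j ∈ Icc 1 l, a j * d j) / a l + ∑ j ∈ Icc (l + 1) p, d j := by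
    rw [div_add' _ _ _ hal.ne', mul_comm (∑ j ∈ Icc (l + 1) p, d j)]
    exact div_le_div_of_nonneg_right (sum_Icc_one_mul_le_of_le a d hlp ha hd) hal.le
  linarith

lemma range_term_eq_add_div (s : ℝ) (lam : ℕ → ℝ) (m : ℕ) (hlam : lam m ≠ 0) :
    (s + ∑ i ∈ Icc 1 m, (lam m - lam i)) / lam m
      = m + (s - ∑ i ∈ Icc 1 m, lam i) / lam m := by
  rw [sum_Icc_one_sub]
  field_simp
  ring

theorem stmt9_general (m p : ℕ)
    (lam : ℕ → ℝ) (ta : ℕ → ℝ) (td : ℕ → ℕ)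
    (hlampos : ∀ i, 1 ≤ i → i ≤ m → 0 < lam i)
    (hlamlt1 : ∀ i, 1 ≤ i → i ≤ m → lam i < 1)
    (htagt1 : ∀ k, 1 ≤ k → k ≤ p → 1 < ta k)
    (htadec : ∀ k l, 1 ≤ k → k < l → l ≤ p → ta l < ta k)
    (hsum : ∑ k ∈ Finset.Icc 1 p, ta k * (td k : ℝ) ≤ ∑ i ∈ Finset.Icc 1 m, lam i)
    (hnem : (Finset.Icc 1 m).Nonempty) (hnep : (Finset.Icc 1 p).Nonempty)
    (κ : ℝ)
    (hκ : κ = min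
        ((Finset.Icc 1 m).inf' hnem (fun j =>
          ((∑ k ∈ Finset.Icc 1 p, ta k * (td k : ℝ))
            + ∑ i ∈ Finset.Icc 1 j, (lam j - lam i)) / lam j))
        ((Finset.Icc 1 p).inf' hnep (fun l =>
          (∑ j ∈ Finset.Icc 1 l, (ta j / ta l) * (td j : ℝ))
            + (∑ j ∈ Finset.Icc (l + 1) p, (td j : ℝ))
            + ∑ i ∈ Finset.Icc 1 m, (1 - lam i / ta l)))) :
    κ = (Finset.Icc 1 m).inf' hnem (fun j =>
          ((∑ k ∈ Finset.Icc 1 p, ta k * (td k : ℝ))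
            + ∑ i ∈ Finset.Icc 1 j, (lam j - lam i)) / lam j) := by
  rw [hκ, min_eq_left]
  refine le_inf' _ _ fun l hl => ?_
  obtain ⟨hl1, hlp⟩ := mem_Icc.mp hl
  have hm : 1 ≤ m := nonempty_Icc.mp hnem
  have hlam : 0 < lam m := hlampos m hm le_rfl
  have hlam_lt_ta : lam m < ta l := (hlamlt1 m hm le_rfl).trans (htagt1 l hl1 hlp)
  refine (inf'_le _ (mem_Icc.mpr ⟨hm, le_rfl⟩)).trans ?_
  calc _ = m + (∑ k ∈ Icc 1 p, ta k * (td k : ℝ) - ∑ i ∈ Icc 1 m, lam i) / lam m :=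
        range_term_eq_add_div _ lam m hlam.ne'
    _ ≤ m + (∑ k ∈ Icc 1 p, ta k * (td k : ℝ) - ∑ i ∈ Icc 1 m, lam i) / ta l := by
        gcongr _ + ?_
        simpa only [div_eq_mul_inv] using
          mul_le_mul_of_nonpos_left (inv_anti₀ hlam hlam_lt_ta.le) (sub_nonpos.mpr hsum)
    _ ≤ _ := add_div_le_graph_term ta (fun j => (td j : ℝ)) lam m hlp (hlam.trans hlam_lt_ta)
        (fun j hj => (htadec l j hl1 (mem_Icc.mp hj).1 (mem_Icc.mp hj).2).le)
        (fun j _ => Nat.cast_nonneg _)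

theorem stmt9 (m p : ℕ) (hm : 1 ≤ m) (hp : 1 ≤ p)
    (lam : ℕ → ℝ) (ta : ℕ → ℝ) (td : ℕ → ℕ)
    (hlampos : ∀ i, 1 ≤ i → i ≤ m → 0 < lam i)
    (hlamlt1 : ∀ i, 1 ≤ i → i ≤ m → lam i < 1)
    (hlammono : ∀ i j, 1 ≤ i → i ≤ j → j ≤ m → lam i ≤ lam j)
    (htagt1 : ∀ k, 1 ≤ k → k ≤ p → 1 < ta k)
    (htadec : ∀ k l, 1 ≤ k → k < l → l ≤ p → ta l < ta k)
    (htdpos : ∀ k, 1 ≤ k → k ≤ p → 0 < td k)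
    (hsum : ∑ k ∈ Finset.Icc 1 p, ta k * (td k : ℝ) ≤ ∑ i ∈ Finset.Icc 1 m, lam i)
    (hnem : (Finset.Icc 1 m).Nonempty) (hnep : (Finset.Icc 1 p).Nonempty)
    (κ : ℝ)
    (hκ : κ = min
        ((Finset.Icc 1 m).inf' hnem (fun j =>
          ((∑ k ∈ Finset.Icc 1 p, ta k * (td k : ℝ))
            + ∑ i ∈ Finset.Icc 1 j, (lam j - lam i)) / lam j))
        ((Finset.Icc 1 p).inf' hnep (fun l =>
          (∑ j ∈ Finset.Icc 1 l, (ta j / ta l) * (td j : ℝ))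
            + (∑ j ∈ Finset.Icc (l + 1) p, (td j : ℝ))
            + ∑ i ∈ Finset.Icc 1 m, (1 - lam i / ta l)))) :
    κ = (Finset.Icc 1 m).inf' hnem (fun j =>
          ((∑ k ∈ Finset.Icc 1 p, ta k * (td k : ℝ))
            + ∑ i ∈ Finset.Icc 1 j, (lam j - lam i)) / lam j) :=
  stmt9_general m p lam ta td hlampos hlamlt1 htagt1 htadec hsum hnem hnep κ hκ
end

section
/- Let 0 < λ₁ ≤ … ≤ λ_m < 1 be reals, let ã₁ > … > ã_p > 1 be reals, and let d̃₁, …, d̃_p be positive integers. Suppose there is 1 ≤ k ≤ p with Σ_{j=1}^{k-1} ã_j d̃_j ≤ Σ_{i=1}^m λ_i < Σ_{j=1}^k ã_j d̃_j. Define κ as the minimum over 1 ≤ j ≤ m of (Σ_{k'=1}^p ã_{k'} d̃_{k'} + Σ_{i=1}^j (λ_j - λ_i))/λ_j and over 1 ≤ l ≤ p of Σ_{j=1}^l (ã_j/ã_l) d̃_j + Σ_{j=l+1}^p d̃_j + Σ_{i=1}^m (1 - λ_i/ã_l). Then κ = Σ_{j=1}^k (ã_j/ã_k) d̃_j + Σ_{j=k+1}^p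 d̃_j + Σ_{i=1}^m (1 - λ_i/ã_k), and κ lies in the interval (m + Σ_{j=k+1}^p d̃_j, m + Σ_{j=k}^p d̃_j]. -/
/-!
Write `A l = ∑_{j ≤ l} ã_j d̃_j`, `L = ∑ λ_i` and
`φ l = (A l - L) / ã_l + ∑_{j > l} d̃_j`, so that the `l`-th term of the second family is `m + φ l`.
A one-line computation gives `φ (l + 1) - φ l = (A l - L) (1 / ã_{l+1} - 1 / ã_l)`, whose sign is
that of `A l - L` because `ã` decreases. As `A` increases, `φ` decreases up to `k` and increases
from `k` on, so `k` minimises the second family. Every term of the first family is at least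
`m + φ k`: multiplied by `λ_j`, it is at least `m λ_j + (A p - L)` by monotonicity of `λ`, while
`λ_j φ k ≤ φ k ≤ φ p ≤ A p - L`. The bounds on `κ` are read off
`φ k = (A (k - 1) - L) / ã_k + d̃_k + ∑_{j > k} d̃_j` and `A (k - 1) ≤ L < A k`.
-/

open Finset

section ExcessDim

variable (a d : ℕ → ℝ) (L : ℝ) (p : ℕ)

noncomputable def excessDim (l : ℕ) : ℝ :=
  (∑ j ∈ Icc 1 l, a j * d j - L) / a l + ∑ j ∈ Icc (l + 1) p, d j

theorem natCast_add_excessDim_eq (lam : ℕ → ℝ) (m l : ℕ) :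
    m + excessDim a d (∑ i ∈ Icc 1 m, lam i) p l
      = ∑ j ∈ Icc 1 l, a j / a l * d j + ∑ j ∈ Icc (l + 1) p, d j
        + ∑ i ∈ Icc 1 m, (1 - lam i / a l) := by
  rw [excessDim, sum_sub_distrib, sum_const, Nat.card_Icc, sub_div, sum_div, sum_div]
  simp only [nsmul_eq_mul, Nat.add_sub_cancel, mul_one, div_mul_eq_mul_div]
  ring

theorem excessDim_add_one {l : ℕ} (hlp : l + 1 ≤ p) (hal : a l ≠ 0) (hal' : a (l + 1) ≠ 0) :
    excessDim a d L p (l + 1)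
      = excessDim a d L p l + (∑ j ∈ Icc 1 l, a j * d j - L) * ((a (l + 1))⁻¹ - (a l)⁻¹) := by
  have htail : ∑ j ∈ Icc (l + 1) p, d j = d (l + 1) + ∑ j ∈ Icc (l + 1 + 1) p, d j := by
    rw [← insert_Icc_add_one_left_eq_Icc hlp, sum_insert (by simp)]
  rw [excessDim, excessDim, sum_Icc_succ_top (by omega), htail]
  field_simp
  ring

variable {a d L p}

theorem sum_Icc_mul_le_sum_Icc_mul (ha : ∀ j ∈ Set.Icc 1 p, 0 < a j) (hd : ∀ j, 0 ≤ d j)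
    {i i' : ℕ} (hii' : i ≤ i') (hi'p : i' ≤ p) :
    ∑ j ∈ Icc 1 i, a j * d j ≤ ∑ j ∈ Icc 1 i', a j * d j :=
  sum_le_sum_of_subset_of_nonneg (Icc_subset_Icc_right hii') fun j hj _ => by
    rw [mem_Icc] at hj
    exact mul_nonneg (ha j ⟨hj.1, hj.2.trans hi'p⟩).le (hd j)

theorem isMinOn_excessDim (ha : ∀ j ∈ Set.Icc 1 p, 0 < a j)
    (hanti : AntitoneOn a (Set.Icc 1 p)) (hd : ∀ j, 0 ≤ d j) {k : ℕ} (hk : k ∈ Set.Icc 1 p)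
    (hlow : ∑ j ∈ Icc 1 (k - 1), a j * d j ≤ L) (hhigh : L ≤ ∑ j ∈ Icc 1 k, a j * d j) :
    IsMinOn (excessDim a d L p) (Set.Icc 1 p) k := by
  refine isMinOn_iff.2 fun l hl => ?_
  have hstep : ∀ i, 1 ≤ i → i + 1 ≤ p → excessDim a d L p (i + 1) = excessDim a d L p i
      + (∑ j ∈ Icc 1 i, a j * d j - L) * ((a (i + 1))⁻¹ - (a i)⁻¹) := fun i hi hip =>
    excessDim_add_one a d L p hip (ha i ⟨hi, by omega⟩).ne' (ha (i + 1) ⟨by omega, hip⟩).ne'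
  have hinv : ∀ i, 1 ≤ i → i + 1 ≤ p → 0 ≤ (a (i + 1))⁻¹ - (a i)⁻¹ := fun i hi hip =>
    sub_nonneg.2 <| inv_anti₀ (ha (i + 1) ⟨by omega, hip⟩)
      (hanti ⟨hi, by omega⟩ ⟨by omega, hip⟩ (by omega))
  obtain ⟨hk1, hkp⟩ := hk
  rcases le_total l k with hlk | hkl
  · refine antitoneOn_of_add_one_le Set.ordConnected_Icc (fun i _ ⟨hi1, _⟩ ⟨_, hik⟩ => ?_)
      ⟨hl.1, hlk⟩ ⟨hk1, le_rfl⟩ hlk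
    rw [hstep i hi1 (by omega)]
    refine add_le_of_nonpos_right (mul_nonpos_of_nonpos_of_nonneg ?_ (hinv i hi1 (by omega)))
    exact sub_nonpos.2 <|
      (sum_Icc_mul_le_sum_Icc_mul ha hd (by omega : i ≤ k - 1) (by omega)).trans hlow
  · refine monotoneOn_of_le_add_one Set.ordConnected_Icc (fun i _ ⟨hki, _⟩ ⟨_, hip⟩ => ?_)
      ⟨le_rfl, hkp⟩ ⟨hkl, hl.2⟩ hkl
    rw [hstep i (by omega) hip]
    refine le_add_of_nonneg_right (mul_nonneg ?_ (hinv i (by omega) hip))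
    exact sub_nonneg.2 (hhigh.trans (sum_Icc_mul_le_sum_Icc_mul ha hd hki (by omega)))

theorem sum_Icc_lt_excessDim {k : ℕ} (hak : 0 < a k) (hhigh : L < ∑ j ∈ Icc 1 k, a j * d j) :
    ∑ j ∈ Icc (k + 1) p, d j < excessDim a d L p k :=
  lt_add_of_pos_left _ (div_pos (sub_pos.2 hhigh) hak)

theorem excessDim_le_sum_Icc {k : ℕ} (hk : k ∈ Set.Icc 1 p) (hak : 0 < a k)
    (hlow : ∑ j ∈ Icc 1 (k - 1), a j * d j ≤ L) :
    excessDim a d L p k ≤ ∑ j ∈ Icc k p, d j := by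
  obtain ⟨n, rfl⟩ := Nat.exists_eq_add_one_of_ne_zero (Nat.one_le_iff_ne_zero.1 hk.1)
  rw [Nat.add_sub_cancel] at hlow
  rw [excessDim, sum_Icc_succ_top (by omega), ← insert_Icc_add_one_left_eq_Icc hk.2,
    sum_insert (by simp), show ∑ j ∈ Icc 1 n, a j * d j + a (n + 1) * d (n + 1) - L
      = (∑ j ∈ Icc 1 n, a j * d j - L) + a (n + 1) * d (n + 1) by ring,
    add_div, mul_div_cancel_left₀ _ hak.ne']
  linarith [div_nonpos_of_nonpos_of_nonneg (sub_nonpos.2 hlow) hak.le]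

theorem excessDim_self_le (hap : 1 ≤ a p) (hL : L ≤ ∑ j ∈ Icc 1 p, a j * d j) :
    excessDim a d L p p ≤ ∑ j ∈ Icc 1 p, a j * d j - L := by
  simpa [excessDim] using div_le_self (sub_nonneg.2 hL) hap

end ExcessDim

theorem natCast_mul_sub_sum_le_sum_sub {lam : ℕ → ℝ} {m j : ℕ}
    (hmono : MonotoneOn lam (Set.Icc 1 m)) (hj : j ∈ Set.Icc 1 m) :
    m * lam j - ∑ i ∈ Icc 1 m, lam i ≤ ∑ i ∈ Icc 1 j, (lam j - lam i) := by
  have hsum : m * lam j - ∑ i ∈ Icc 1 m, lam i = ∑ i ∈ Icc 1 m, (lam j - lam i) := by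
    rw [sum_sub_distrib, sum_const, Nat.card_Icc, nsmul_eq_mul, Nat.add_sub_cancel]
  rw [hsum, ← sum_sdiff (Icc_subset_Icc_right hj.2)]
  refine add_le_of_nonpos_left (sum_nonpos fun i hi => ?_)
  simp only [mem_sdiff, mem_Icc, not_and, not_le] at hi
  exact sub_nonpos.2 (hmono hj ⟨hi.1.1, hi.1.2⟩ (hi.2 hi.1.1).le)

theorem natCast_add_le_sum_sub_div {lam : ℕ → ℝ} {m j : ℕ}
    (hmono : MonotoneOn lam (Set.Icc 1 m)) (hj : j ∈ Set.Icc 1 m)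
    (hpos : 0 < lam j) (hle : lam j ≤ 1) {x S : ℝ} (hx : 0 ≤ x)
    (hxS : x ≤ S - ∑ i ∈ Icc 1 m, lam i) :
    m + x ≤ (S + ∑ i ∈ Icc 1 j, (lam j - lam i)) / lam j := by
  rw [le_div_iff₀ hpos]
  linarith [natCast_mul_sub_sum_le_sum_sub hmono hj, mul_le_of_le_one_right hx hle]

theorem stmt10_general (m p : ℕ)
    (lam : ℕ → ℝ) (ta : ℕ → ℝ) (td : ℕ → ℕ)
    (hlampos : ∀ i, 1 ≤ i → i ≤ m → 0 < lam i)
    (hlamlt1 : ∀ i, 1 ≤ i → i ≤ m → lam i < 1)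
    (hlammono : ∀ i j, 1 ≤ i → i ≤ j → j ≤ m → lam i ≤ lam j)
    (htagt1 : ∀ k, 1 ≤ k → k ≤ p → 1 < ta k)
    (htadec : ∀ k l, 1 ≤ k → k < l → l ≤ p → ta l < ta k)
    (k : ℕ) (hk1 : 1 ≤ k) (hkp : k ≤ p)
    (hlow : ∑ j ∈ Finset.Icc 1 (k - 1), ta j * (td j : ℝ)
              ≤ ∑ i ∈ Finset.Icc 1 m, lam i)
    (hhigh : ∑ i ∈ Finset.Icc 1 m, lam i
              < ∑ j ∈ Finset.Icc 1 k, ta j * (td j : ℝ))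
    (hnem : (Finset.Icc 1 m).Nonempty) (hnep : (Finset.Icc 1 p).Nonempty)
    (κ : ℝ)
    (hκ : κ = min
        ((Finset.Icc 1 m).inf' hnem (fun j =>
          ((∑ k' ∈ Finset.Icc 1 p, ta k' * (td k' : ℝ))
            + ∑ i ∈ Finset.Icc 1 j, (lam j - lam i)) / lam j))
        ((Finset.Icc 1 p).inf' hnep (fun l =>
          (∑ j ∈ Finset.Icc 1 l, (ta j / ta l) * (td j : ℝ))
            + (∑ j ∈ Finset.Icc (l + 1) p, (td j : ℝ))
            + ∑ i ∈ Finset.Icc 1 m, (1 - lam i / ta l)))) :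
    κ = (∑ j ∈ Finset.Icc 1 k, (ta j / ta k) * (td j : ℝ))
          + (∑ j ∈ Finset.Icc (k + 1) p, (td j : ℝ))
          + ∑ i ∈ Finset.Icc 1 m, (1 - lam i / ta k) ∧
      (m : ℝ) + ∑ j ∈ Finset.Icc (k + 1) p, (td j : ℝ) < κ ∧
      κ ≤ (m : ℝ) + ∑ j ∈ Finset.Icc k p, (td j : ℝ) := by
  set L := ∑ i ∈ Finset.Icc 1 m, lam i
  set φ := excessDim ta (fun j => (td j : ℝ)) L p
  have hG : ∀ l, (∑ j ∈ Finset.Icc 1 l, (ta j / ta l) * (td j : ℝ))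
      + (∑ j ∈ Finset.Icc (l + 1) p, (td j : ℝ)) + ∑ i ∈ Finset.Icc 1 m, (1 - lam i / ta l)
      = m + φ l := fun l => (natCast_add_excessDim_eq ta _ p lam m l).symm
  simp only [hG] at hκ ⊢
  have hk : k ∈ Set.Icc 1 p := ⟨hk1, hkp⟩
  have hta : ∀ j ∈ Set.Icc 1 p, 0 < ta j := fun j hj => one_pos.trans (htagt1 j hj.1 hj.2)
  have hanti : StrictAntiOn ta (Set.Icc 1 p) := fun i hi j hj hij => htadec i j hi.1 hij hj.2
  have hmono : MonotoneOn lam (Set.Icc 1 m) := fun i hi j hj hij => hlammono i j hi.1 hij hj.2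
  have hmin : ∀ l ∈ Set.Icc 1 p, φ k ≤ φ l := isMinOn_iff.1 <|
    isMinOn_excessDim hta hanti.antitoneOn (fun j => Nat.cast_nonneg _) hk hlow hhigh.le
  have hlower := sum_Icc_lt_excessDim (p := p) (hta k hk) hhigh
  have hφk : κ = m + φ k := by
    have hinf : (Finset.Icc 1 p).inf' hnep (fun l => m + φ l) = m + φ k :=
      le_antisymm (inf'_le _ (mem_Icc.2 hk))
        (le_inf' _ _ fun l hl => add_le_add_right (hmin l (mem_Icc.1 hl)) _)
    rw [hκ, hinf]
    refine min_eq_right (le_inf' _ _ fun j hj => ?_)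
    rw [mem_Icc] at hj
    have hAkp := sum_Icc_mul_le_sum_Icc_mul hta (fun j => Nat.cast_nonneg (td j)) hkp le_rfl
    exact natCast_add_le_sum_sub_div hmono hj (hlampos j hj.1 hj.2) (hlamlt1 j hj.1 hj.2).le
      ((sum_nonneg fun j _ => Nat.cast_nonneg _).trans hlower.le)
      ((hmin p ⟨hk1.trans hkp, le_rfl⟩).trans
        (excessDim_self_le (htagt1 p (hk1.trans hkp) le_rfl).le (hhigh.le.trans hAkp)))
  subst hφk
  exact ⟨rfl, add_lt_add_right hlower _,
    add_le_add_right (excessDim_le_sum_Icc hk (hta k hk) hlow) _⟩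

theorem stmt10 (m p : ℕ) (hm : 1 ≤ m) (hp : 1 ≤ p)
    (lam : ℕ → ℝ) (ta : ℕ → ℝ) (td : ℕ → ℕ)
    (hlampos : ∀ i, 1 ≤ i → i ≤ m → 0 < lam i)
    (hlamlt1 : ∀ i, 1 ≤ i → i ≤ m → lam i < 1)
    (hlammono : ∀ i j, 1 ≤ i → i ≤ j → j ≤ m → lam i ≤ lam j)
    (htagt1 : ∀ k, 1 ≤ k → k ≤ p → 1 < ta k)
    (htadec : ∀ k l, 1 ≤ k → k < l → l ≤ p → ta l < ta k)
    (htdpos : ∀ k, 1 ≤ k → k ≤ p → 0 < td k)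
    (k : ℕ) (hk1 : 1 ≤ k) (hkp : k ≤ p)
    (hlow : ∑ j ∈ Finset.Icc 1 (k - 1), ta j * (td j : ℝ)
              ≤ ∑ i ∈ Finset.Icc 1 m, lam i)
    (hhigh : ∑ i ∈ Finset.Icc 1 m, lam i
              < ∑ j ∈ Finset.Icc 1 k, ta j * (td j : ℝ))
    (hnem : (Finset.Icc 1 m).Nonempty) (hnep : (Finset.Icc 1 p).Nonempty)
    (κ : ℝ)
    (hκ : κ = min
        ((Finset.Icc 1 m).inf' hnem (fun j =>
          ((∑ k' ∈ Finset.Icc 1 p, ta k' * (td k' : ℝ))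
            + ∑ i ∈ Finset.Icc 1 j, (lam j - lam i)) / lam j))
        ((Finset.Icc 1 p).inf' hnep (fun l =>
          (∑ j ∈ Finset.Icc 1 l, (ta j / ta l) * (td j : ℝ))
            + (∑ j ∈ Finset.Icc (l + 1) p, (td j : ℝ))
            + ∑ i ∈ Finset.Icc 1 m, (1 - lam i / ta l)))) :
    κ = (∑ j ∈ Finset.Icc 1 k, (ta j / ta k) * (td j : ℝ))
          + (∑ j ∈ Finset.Icc (k + 1) p, (td j : ℝ))
          + ∑ i ∈ Finset.Icc 1 m, (1 - lam i / ta k) ∧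
      (m : ℝ) + ∑ j ∈ Finset.Icc (k + 1) p, (td j : ℝ) < κ ∧
      κ ≤ (m : ℝ) + ∑ j ∈ Finset.Icc k p, (td j : ℝ) :=
  stmt10_general m p lam ta td hlampos hlamlt1 hlammono htagt1 htadec k hk1 hkp hlow hhigh hnem hnep
    κ hκ
end

section
/- Let d, m ≥ 1, let 0 < α₁ ≤ α₂ ≤ … ≤ α_m ≤ 1 be reals, and let f = (f₁, …, f_m) : [0,1]^d → ℝ^m satisfy |f_i(x) - f_i(y)| ≤ c ‖x - y‖^{α_i} for all x, y ∈ [0,1]^d, all 1 ≤ i ≤ m, and some constant c > 0. Then the Hausdorff dimension of the image f([0,1]^d) is at most min{ m, (d + Σ_{i=1}^j (α_j - α_i)) / α_j : 1 ≤ j ≤ m }. -/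
/-!
Fix an exponent `a > 0`. For `N ≥ 1` the cube `[0,1]^d` is within distance `√d / N` of `N^d` of
its points, and near each of them the image of `f` lies in a box whose `i`-th side is `≲ N^{-α_i}`.
Such a box splits into `≲ ∏_i N^{max(a - α_i, 0)}` cubes of side `≍ N^{-a}`, so `f([0,1]^d)` is
covered by `≲ N^{d + Σ_i max(a - α_i, 0)}` sets of diameter `≍ N^{-a}`, and its Hausdorff measure in
dimension `(d + Σ_i max(a - α_i, 0)) / a` is finite. For monotone `α` and `a = α_j` the sum is
`Σ_{i ≤ j} (α_j - α_i)`. The covering is done in `Fin m → ℝ`, whose sup metric makes the diameter of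
a cube its side; it is linearly equivalent to the Euclidean space, which preserves `dimH`.
-/

open MeasureTheory Filter Topology Set
open scoped ENNReal NNReal

theorem dimH_le_of_forall_card_mul_rpow_le {X : Type*} [EMetricSpace X] {E : Set X} {s : ℝ≥0}
    {ι : ℕ → Type*} [∀ n, Fintype (ι n)] (t : ∀ n, ι n → Set X) (r : ℕ → ℝ≥0∞)
    (hr : Tendsto r atTop (𝓝 0)) (ht : ∀ n i, Metric.ediam (t n i) ≤ r n)
    (hE : ∀ n, E ⊆ ⋃ i, t n i) {C : ℝ≥0∞} (hC : C ≠ ∞)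
    (hcard : ∀ n, Fintype.card (ι n) * r n ^ (s : ℝ) ≤ C) : dimH E ≤ s := by
  borelize X
  refine dimH_le_of_hausdorffMeasure_ne_top (ne_top_of_le_ne_top hC ?_)
  calc μH[s] E ≤ liminf (fun n => ∑ i, Metric.ediam (t n i) ^ (s : ℝ)) atTop :=
        Measure.hausdorffMeasure_le_liminf_sum _ E r hr t (.of_forall ht) (.of_forall hE)
    _ ≤ C := by
      refine liminf_le_of_frequently_le' (.of_forall fun n => (hcard n).trans' ?_)
      calc ∑ i, Metric.ediam (t n i) ^ (s : ℝ) ≤ ∑ _i : ι n, r n ^ (s : ℝ) :=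
            Finset.sum_le_sum fun i _ => ENNReal.rpow_le_rpow (ht n i) s.2
        _ = _ := by rw [Finset.sum_const, Finset.card_univ, nsmul_eq_mul]

theorem Icc_subset_iUnion_Icc_add_mul {b ε : ℝ} (hε : 0 < ε) {M : ℕ} (hM : 0 < M) :
    Icc b (b + M * ε) ⊆ ⋃ l : Fin M, Icc (b + l * ε) (b + l * ε + ε) := by
  intro t ⟨hbt, htb⟩
  have hq : 0 ≤ (t - b) / ε := div_nonneg (by linarith) hε.le
  refine mem_iUnion.2 ⟨⟨min ⌊(t - b) / ε⌋₊ (M - 1), by omega⟩, ?_, ?_⟩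
  · have hmin := (Nat.cast_le (α := ℝ)).2 (min_le_left ⌊(t - b) / ε⌋₊ (M - 1))
    have hfloor := (le_div_iff₀ hε).1 (Nat.floor_le hq)
    dsimp only
    nlinarith
  · rcases le_total ⌊(t - b) / ε⌋₊ (M - 1) with h | h
    · simp only [min_eq_left h]
      linarith [(div_lt_iff₀ hε).1 (Nat.lt_floor_add_one ((t - b) / ε))]
    · simp only [min_eq_right h, Nat.cast_pred hM]
      linarith [sub_one_mul (M : ℝ) ε]

def cube {κ : Type*} (b : κ → ℝ) (ε : ℝ) : Set (κ → ℝ) := pi univ fun i => Icc (b i) (b i + ε)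

theorem univ_pi_Icc_subset_iUnion_cube {κ : Type*} (b : κ → ℝ) {ε : ℝ} (hε : 0 < ε) (M : κ → ℕ)
    (hM : ∀ i, 0 < M i) :
    pi univ (fun i => Icc (b i) (b i + M i * ε)) ⊆
      ⋃ l : ∀ i, Fin (M i), cube (fun i => b i + l i * ε) ε := by
  unfold cube
  rw [iUnion_univ_pi (fun i (l : Fin (M i)) => Icc (b i + l * ε) (b i + l * ε + ε))]
  exact pi_mono fun i _ => Icc_subset_iUnion_Icc_add_mul hε (hM i)

theorem ediam_cube_le {κ : Type*} [Fintype κ] (b : κ → ℝ) (ε : ℝ) :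
    Metric.ediam (cube b ε) ≤ .ofReal ε :=
  Metric.ediam_pi_le_of_le fun i => by rw [Real.ediam_Icc, add_sub_cancel_left]

theorem Nat.floor_mul_rpow_add_one_le {x N β : ℝ} (hx : 0 ≤ x) (hN : 1 ≤ N) :
    (⌊x * N ^ β⌋₊ + 1 : ℝ) ≤ (x + 1) * N ^ max β 0 := by
  have hpow : N ^ β ≤ N ^ max β 0 := Real.rpow_le_rpow_of_exponent_le hN (le_max_left _ _)
  have hone : 1 ≤ N ^ max β 0 := Real.one_le_rpow hN (le_max_right _ _)
  have hfloor : (⌊x * N ^ β⌋₊ : ℝ) ≤ x * N ^ β := Nat.floor_le (by positivity)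
  nlinarith

theorem prod_floor_mul_rpow_add_one_le {κ : Type*} [Fintype κ] {x β : κ → ℝ}
    (hx : ∀ i, 0 ≤ x i) {N : ℝ} (hN : 1 ≤ N) :
    ∏ i, (⌊x i * N ^ β i⌋₊ + 1 : ℝ) ≤ (∏ i, (x i + 1)) * N ^ ∑ i, max (β i) 0 := by
  rw [Real.rpow_sum_of_pos (by linarith), ← Finset.prod_mul_distrib]
  exact Finset.prod_le_prod (fun i _ => by positivity) fun i _ =>
    Nat.floor_mul_rpow_add_one_le (hx i) hN

theorem div_rpow_le_floor_add_one_mul {ρ N α a : ℝ} (hρ : 0 ≤ ρ) (hN : 0 < N) :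
    (ρ / N) ^ α ≤ (⌊ρ ^ α * N ^ (a - α)⌋₊ + 1) * N ^ (-a) := by
  have hsplit : (ρ / N) ^ α = ρ ^ α * N ^ (a - α) * N ^ (-a) := by
    rw [Real.div_rpow hρ hN.le, mul_assoc, ← Real.rpow_add hN,
      show a - α + -a = -α by ring, Real.rpow_neg hN.le, div_eq_mul_inv]
  rw [hsplit]
  gcongr
  exact (Nat.lt_floor_add_one _).le

theorem mul_prod_floor_mul_rpow_mul_rpow_le {κ : Type*} [Fintype κ] {α : κ → ℝ} {p D ρ a C N : ℝ}
    (hp : p ≤ N ^ D) (hρ : 0 ≤ ρ) (ha : 0 < a) (hC : 0 ≤ C) (hN : 1 ≤ N) :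
    p * (∏ i, (⌊ρ ^ α i * N ^ (a - α i)⌋₊ + 1 : ℝ)) *
        (C * N ^ (-a)) ^ ((D + ∑ i, max (a - α i) 0) / a) ≤
      (∏ i, (ρ ^ α i + 1)) * C ^ ((D + ∑ i, max (a - α i) 0) / a) := by
  set S := ∑ i, max (a - α i) 0
  set s := (D + S) / a
  have hN0 : 0 < N := by linarith
  have hexp : N ^ D * N ^ S * (N ^ (-a)) ^ s = 1 := by
    rw [← Real.rpow_mul hN0.le, ← Real.rpow_add hN0, ← Real.rpow_add hN0,
      show D + S + -a * s = 0 by rw [neg_mul, mul_div_cancel₀ _ ha.ne', add_neg_cancel],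
      Real.rpow_zero]
  calc p * (∏ i, (⌊ρ ^ α i * N ^ (a - α i)⌋₊ + 1 : ℝ)) * (C * N ^ (-a)) ^ s
      ≤ N ^ D * ((∏ i, (ρ ^ α i + 1)) * N ^ S) * (C * N ^ (-a)) ^ s := by
        gcongr
        exact prod_floor_mul_rpow_add_one_le (fun i => by positivity) hN
    _ = (∏ i, (ρ ^ α i + 1)) * C ^ s * (N ^ D * N ^ S * (N ^ (-a)) ^ s) := by
        rw [Real.mul_rpow hC (by positivity)]; ring
    _ = (∏ i, (ρ ^ α i + 1)) * C ^ s := by rw [hexp, mul_one]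

section HolderCoord

variable {X κ : Type*} [PseudoMetricSpace X] {K : Set X} {g : X → κ → ℝ} {α : κ → ℝ} {c : ℝ}

theorem image_subset_iUnion_univ_pi_Icc {P : Set X} (hPK : P ⊆ K) {ρ : ℝ}
    (hP : ∀ x ∈ K, ∃ p ∈ P, dist x p ≤ ρ) (hα : ∀ i, 0 ≤ α i) (hc : 0 ≤ c)
    (hg : ∀ i, ∀ x ∈ K, ∀ y ∈ K, |g x i - g y i| ≤ c * dist x y ^ α i) :
    g '' K ⊆ ⋃ p ∈ P, pi univ fun i => Icc (g p i - c * ρ ^ α i) (g p i + c * ρ ^ α i) := by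
  rintro _ ⟨x, hx, rfl⟩
  obtain ⟨p, hp, hxp⟩ := hP x hx
  refine mem_biUnion hp (mem_univ_pi.2 fun i => ?_)
  have := (hg i x hx p (hPK hp)).trans <|
    mul_le_mul_of_nonneg_left (Real.rpow_le_rpow dist_nonneg hxp (hα i)) hc
  constructor <;> linarith [abs_le.1 this]

theorem image_subset_iUnion_cube {P : Set X} (hPK : P ⊆ K) {ρ : ℝ}
    (hP : ∀ x ∈ K, ∃ p ∈ P, dist x p ≤ ρ) (hα : ∀ i, 0 ≤ α i) (hc : 0 ≤ c)
    (hg : ∀ i, ∀ x ∈ K, ∀ y ∈ K, |g x i - g y i| ≤ c * dist x y ^ α i) {ε : ℝ} (hε : 0 < ε)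
    {M : κ → ℕ} (hM : ∀ i, 0 < M i) (hMε : ∀ i, 2 * (c * ρ ^ α i) ≤ M i * ε) :
    g '' K ⊆ ⋃ q : P × (∀ i, Fin (M i)),
      cube (fun i => g q.1 i - c * ρ ^ α i + (q.2 i : ℕ) * ε) ε := by
  refine (image_subset_iUnion_univ_pi_Icc hPK hP hα hc hg).trans (iUnion₂_subset fun p hp => ?_)
  refine (pi_mono fun i _ => Icc_subset_Icc le_rfl ?_).trans
    ((univ_pi_Icc_subset_iUnion_cube _ hε M hM).trans
      (iUnion_subset fun l => subset_iUnion_of_subset (⟨p, hp⟩, l) subset_rfl))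
  linarith [hMε i]

theorem dimH_image_le_of_holder_coord [Fintype κ] {D ρ : ℝ} (hD : 0 ≤ D) (hρ : 0 ≤ ρ)
    (hK : ∀ n : ℕ, ∃ P : Finset X, ↑P ⊆ K ∧ (P.card : ℝ) ≤ (n + 1) ^ D ∧
      ∀ x ∈ K, ∃ p ∈ P, dist x p ≤ ρ / (n + 1))
    (hα : ∀ i, 0 ≤ α i) (hc : 0 < c)
    (hg : ∀ i, ∀ x ∈ K, ∀ y ∈ K, |g x i - g y i| ≤ c * dist x y ^ α i) {a : ℝ} (ha : 0 < a) :
    dimH (g '' K) ≤ .ofReal ((D + ∑ i, max (a - α i) 0) / a) := by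
  classical
  set s := (D + ∑ i, max (a - α i) 0) / a
  have hs : 0 ≤ s := div_nonneg (add_nonneg hD (Finset.sum_nonneg fun i _ => le_max_right _ _))
    ha.le
  have hN : ∀ n : ℕ, 1 ≤ (n + 1 : ℝ) := fun n => by linarith [n.cast_nonneg (α := ℝ)]
  choose P hPK hPcard hP using hK
  let ε : ℕ → ℝ := fun n => 2 * c * (n + 1 : ℝ) ^ (-a)
  have hε : ∀ n, 0 < ε n := fun n => by positivity
  let M : ℕ → κ → ℕ := fun n i => ⌊ρ ^ α i * (n + 1 : ℝ) ^ (a - α i)⌋₊ + 1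
  have hMε : ∀ n i, 2 * (c * (ρ / (n + 1)) ^ α i) ≤ M n i * ε n := fun n i => by
    have := div_rpow_le_floor_add_one_mul (α := α i) (a := a) hρ (zero_lt_one.trans_le (hN n))
    simp only [ε, M]
    push_cast
    nlinarith
  refine dimH_le_of_forall_card_mul_rpow_le (s := s.toNNReal) _ (fun n => .ofReal (ε n)) ?_
    (fun n q => ediam_cube_le _ _) (fun n => image_subset_iUnion_cube (hPK n) (hP n) hα hc.le hg
      (hε n) (fun i => Nat.succ_pos _) (hMε n))
    (C := .ofReal ((∏ i, (ρ ^ α i + 1)) * (2 * c) ^ s)) ENNReal.ofReal_ne_top fun n => ?_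
  · rw [← ENNReal.ofReal_zero]
    refine ENNReal.tendsto_ofReal ?_
    have h : Tendsto (fun n : ℕ => (n + 1 : ℝ) ^ (-a)) atTop (𝓝 0) :=
      (tendsto_rpow_neg_atTop ha).comp
        (tendsto_atTop_add_const_right atTop 1 tendsto_natCast_atTop_atTop)
    simpa using h.const_mul (2 * c)
  · rw [Real.coe_toNNReal s hs, ENNReal.ofReal_rpow_of_nonneg (hε n).le hs,
      ← ENNReal.ofReal_natCast, ← ENNReal.ofReal_mul (Nat.cast_nonneg _)]
    refine ENNReal.ofReal_le_ofReal ?_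
    convert mul_prod_floor_mul_rpow_mul_rpow_le (α := α) (C := 2 * c) (hPcard n) hρ ha
      (by positivity) (hN n) using 2
    simp [Fintype.card_prod, Fintype.card_pi]

end HolderCoord

theorem EuclideanSpace.dist_le_sqrt_card_mul {ι : Type*} [Fintype ι] {x y : EuclideanSpace ℝ ι}
    {r : ℝ} (hr : 0 ≤ r) (h : ∀ i, dist (x i) (y i) ≤ r) : dist x y ≤ √(Fintype.card ι) * r := by
  calc dist x y = √(∑ i, dist (x i) (y i) ^ 2) := EuclideanSpace.dist_eq x y
    _ ≤ √(∑ _i : ι, r ^ 2) := by gcongr with i; exact h i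
    _ = √(Fintype.card ι) * r := by
      rw [Finset.sum_const, Finset.card_univ, nsmul_eq_mul, Real.sqrt_mul (by positivity),
        Real.sqrt_sq hr]

def unitCube (ι : Type*) : Set (EuclideanSpace ℝ ι) := {x | ∀ i, x i ∈ Icc 0 1}

theorem exists_finset_subset_unitCube_dist_le (ι : Type*) [Fintype ι] (n : ℕ) :
    ∃ P : Finset (EuclideanSpace ℝ ι), ↑P ⊆ unitCube ι ∧
      (P.card : ℝ) ≤ (n + 1) ^ (Fintype.card ι : ℝ) ∧
      ∀ x ∈ unitCube ι, ∃ p ∈ P, dist x p ≤ √(Fintype.card ι) / (n + 1) := by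
  classical
  set N := n + 1
  have hN : (0 : ℝ) < N := Nat.cast_pos.2 n.succ_pos
  let p : (ι → Fin N) → EuclideanSpace ℝ ι := fun k => WithLp.toLp 2 fun i => (k i : ℝ) / N
  refine ⟨Finset.univ.image p, ?_, ?_, ?_⟩
  · simp only [Finset.coe_image, Finset.coe_univ, image_univ]
    rintro _ ⟨k, rfl⟩ i
    exact ⟨by positivity, div_le_one_of_le₀ (Nat.cast_le.2 (k i).2.le) hN.le⟩
  · rw [Real.rpow_natCast]
    exact_mod_cast Finset.card_image_le.trans (by simp [N])
  · intro x hx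
    have hcell : ∀ i, ∃ l : Fin N,
        x i ∈ Icc (0 + (l : ℕ) * (1 / N : ℝ)) (0 + (l : ℕ) * (1 / N : ℝ) + 1 / N) := by
      intro i
      have hxi : x i ∈ Icc (0 : ℝ) (0 + N * (1 / N)) := by
        rw [zero_add, mul_one_div_cancel hN.ne']; exact hx i
      simpa using Icc_subset_iUnion_Icc_add_mul (one_div_pos.2 hN) n.succ_pos hxi
    choose k hk using hcell
    refine ⟨p k, Finset.mem_image_of_mem p (Finset.mem_univ k), ?_⟩
    rw [show (n + 1 : ℝ) = N by simp [N], div_eq_mul_one_div]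
    refine EuclideanSpace.dist_le_sqrt_card_mul (by positivity) fun i => ?_
    have hki : ((k i : ℕ) : ℝ) / N ∈
        Icc (0 + (k i : ℕ) * (1 / N : ℝ)) (0 + (k i : ℕ) * (1 / N : ℝ) + 1 / N) :=
      ⟨by rw [zero_add, mul_one_div], by rw [zero_add, mul_one_div]; linarith [one_div_pos.2 hN]⟩
    simpa using Real.dist_le_of_mem_Icc (hk i) hki

theorem Monotone.sum_max_sub_zero_eq_sum_Iic {ι : Type*} [Fintype ι] [LinearOrder ι]
    [LocallyFiniteOrderBot ι] {α : ι → ℝ} (hα : Monotone α) (j : ι) :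
    ∑ i, max (α j - α i) 0 = ∑ i ∈ Finset.Iic j, (α j - α i) := by
  rw [← Finset.sum_subset (Finset.subset_univ (Finset.Iic j)) fun i _ hi =>
    max_eq_right (sub_nonpos.2 (hα (le_of_not_ge (by simpa using hi))))]
  exact Finset.sum_congr rfl fun i hi => max_eq_left (sub_nonneg.2 (hα (Finset.mem_Iic.1 hi)))

theorem stmt11_general (d m : ℕ) [NeZero m]
    (α : Fin m → ℝ) (hαpos : ∀ i, 0 < α i)
    (hαmono : Monotone α)
    (f : EuclideanSpace ℝ (Fin d) → EuclideanSpace ℝ (Fin m)) (c : ℝ) (hc : 0 < c)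
    (K : Set (EuclideanSpace ℝ (Fin d)))
    (hK : K = {x | ∀ i, x i ∈ Set.Icc (0:ℝ) 1})
    (hf : ∀ i, ∀ x ∈ K, ∀ y ∈ K, |f x i - f y i| ≤ c * ‖x - y‖ ^ (α i)) :
    dimH (f '' K) ≤ ENNReal.ofReal (min (m : ℝ)
      (Finset.univ.inf' Finset.univ_nonempty (fun j : Fin m =>
        ((d : ℝ) + ∑ i ∈ Finset.Iic j, (α j - α i)) / α j))) := by
  subst hK
  let e := EuclideanSpace.equiv (Fin m) ℝ
  have hdim : ∀ j, dimH (e '' (f '' unitCube (Fin d))) ≤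
      .ofReal (((d : ℝ) + ∑ i ∈ Finset.Iic j, (α j - α i)) / α j) := fun j => by
    rw [← hαmono.sum_max_sub_zero_eq_sum_Iic, image_image]
    simpa using dimH_image_le_of_holder_coord (Nat.cast_nonneg _) (Real.sqrt_nonneg _)
      (exists_finset_subset_unitCube_dist_le (Fin d)) (fun i => (hαpos i).le) hc
      (g := fun x => e (f x)) (fun i x hx y hy => by rw [dist_eq_norm]; exact hf i x hx y hy)
      (hαpos j)
  rw [← e.dimH_image, ENNReal.ofReal_min, le_min_iff]
  constructor
  · refine (dimH_mono (subset_univ _)).trans ?_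
    rw [Real.dimH_univ_pi, Fintype.card_fin, ENNReal.ofReal_natCast]
  · obtain ⟨j, -, hj⟩ := Finset.exists_mem_eq_inf' Finset.univ_nonempty
      fun j : Fin m => ((d : ℝ) + ∑ i ∈ Finset.Iic j, (α j - α i)) / α j
    rw [hj]
    exact hdim j

theorem stmt11 (d m : ℕ) (hd : 1 ≤ d) (hm : 1 ≤ m) [NeZero m]
    (α : Fin m → ℝ) (hαpos : ∀ i, 0 < α i) (hα1 : ∀ i, α i ≤ 1)
    (hαmono : Monotone α)
    (f : EuclideanSpace ℝ (Fin d) → EuclideanSpace ℝ (Fin m)) (c : ℝ) (hc : 0 < c)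
    (K : Set (EuclideanSpace ℝ (Fin d)))
    (hK : K = {x | ∀ i, x i ∈ Set.Icc (0:ℝ) 1})
    (hf : ∀ i, ∀ x ∈ K, ∀ y ∈ K, |f x i - f y i| ≤ c * ‖x - y‖ ^ (α i)) :
    dimH (f '' K) ≤ ENNReal.ofReal (min (m : ℝ)
      (Finset.univ.inf' Finset.univ_nonempty (fun j : Fin m =>
        ((d : ℝ) + ∑ i ∈ Finset.Iic j, (α j - α i)) / α j))) :=
  stmt11_general d m α hαpos hαmono f c hc K hK hf
end

section
/- Let p ≥ 1, let a₁, …, a_p > 0 be reals, let d₁, …, d_p be positive integers, and let β > 0 satisfy β < Σ_{k=1}^p a_k d_k. Then the iterated integral ∫₀² … ∫₀² (Σ_{k=1}^p r_k^{1/a_k})^{-β} Π_{k=1}^p r_k^{d_k - 1} dr₁ … dr_p is finite. -/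
/-!
Put `S = ∑ k, a k * d k`. Weighted AM-GM with weights `a k * d k / S` applied to `r k ^ (1 / a k)`
gives `(∑ k, r k ^ (1 / a k)) ^ (-β) ≤ ∏ k, r k ^ (-β * d k / S)`, so the integrand is dominated
by `∏ k, r k ^ (d k * (1 - β / S) - 1)`. Since `β < S`, every exponent exceeds `-1`, and this
product of one-variable functions is integrable on the box.
-/

open MeasureTheory Real Set Finset

section

variable {ι : Type*} [Fintype ι]

theorem integrableOn_prod_rpow_univ_pi_Ioo {c : ι → ℝ} (hc : ∀ k, -1 < c k) (b : ℝ) :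
    IntegrableOn (fun r : ι → ℝ => ∏ k, r k ^ c k) (univ.pi fun _ => Ioo 0 b) := by
  rw [IntegrableOn, volume_pi, Measure.restrict_pi_pi]
  refine Integrable.fintype_prod (f := fun k x => x ^ c k) fun k => ?_
  exact (intervalIntegral.intervalIntegrable_rpow' (hc k) (a := 0) (b := b)).1.mono_set
    Ioo_subset_Ioc_self

theorem prod_rpow_le_sum {w z : ι → ℝ} (hw : ∀ k, 0 ≤ w k) (hw1 : ∑ k, w k = 1)
    (hz : ∀ k, 0 ≤ z k) : ∏ k, z k ^ w k ≤ ∑ k, z k := by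
  have hwle : ∀ k, w k ≤ 1 := fun k =>
    hw1 ▸ single_le_sum (fun i _ => hw i) (mem_univ k)
  calc ∏ k, z k ^ w k ≤ ∑ k, w k * z k :=
        geom_mean_le_arith_mean_weighted _ _ _ (fun k _ => hw k) hw1 (fun k _ => hz k)
    _ ≤ ∑ k, z k := sum_le_sum fun k _ => mul_le_of_le_one_left (hz k) (hwle k)

theorem sum_rpow_inv_rpow_neg_le_prod {a d r : ι → ℝ} (ha : ∀ k, 0 < a k) (hd : ∀ k, 0 ≤ d k)
    (hS : 0 < ∑ k, a k * d k) {β : ℝ} (hβ : 0 ≤ β) (hr : ∀ k, 0 < r k) :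
    (∑ k, r k ^ (1 / a k)) ^ (-β) ≤ ∏ k, r k ^ (-(β * d k / ∑ j, a j * d j)) := by
  set S := ∑ j, a j * d j
  have hz : ∀ k, 0 < r k ^ (1 / a k) := fun k => rpow_pos_of_pos (hr k) _
  have hw1 : ∑ k, a k * d k / S = 1 := by rw [← sum_div, div_self hS.ne']
  have hamgm := prod_rpow_le_sum (fun k => div_nonneg (mul_nonneg (ha k).le (hd k)) hS.le) hw1
    (fun k => (hz k).le)
  calc (∑ k, r k ^ (1 / a k)) ^ (-β)
      ≤ (∏ k, (r k ^ (1 / a k)) ^ (a k * d k / S)) ^ (-β) :=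
        rpow_le_rpow_of_nonpos (prod_pos fun k _ => rpow_pos_of_pos (hz k) _) hamgm
          (neg_nonpos.2 hβ)
    _ = ∏ k, r k ^ (-(β * d k / S)) := by
        rw [← finsetProd_rpow _ _ fun k _ => (rpow_pos_of_pos (hz k) _).le]
        refine prod_congr rfl fun k _ => ?_
        rw [← rpow_mul (hr k).le, ← rpow_mul (hr k).le]
        congr 1
        field_simp [(ha k).ne']

theorem integrableOn_sum_rpow_inv_rpow_neg_mul_prod_rpow {a d : ι → ℝ} (ha : ∀ k, 0 < a k)
    (hd : ∀ k, 0 < d k) {β : ℝ} (hβ0 : 0 ≤ β) (hβ : β < ∑ k, a k * d k) (b : ℝ) :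
    IntegrableOn (fun r : ι → ℝ => (∑ k, r k ^ (1 / a k)) ^ (-β) * ∏ k, r k ^ (d k - 1))
      (univ.pi fun _ => Ioo 0 b) := by
  set S := ∑ k, a k * d k
  have hS : 0 < S := hβ0.trans_lt hβ
  have hc : ∀ k, -1 < d k - 1 - β * d k / S := by
    intro k
    have : β * d k / S < d k := by
      rw [div_lt_iff₀ hS, mul_comm (d k)]
      exact mul_lt_mul_of_pos_right hβ (hd k)
    linarith
  have hbox : MeasurableSet (univ.pi fun _ : ι => Ioo (0 : ℝ) b) :=
    MeasurableSet.univ_pi fun _ => measurableSet_Ioo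
  refine (integrableOn_prod_rpow_univ_pi_Ioo hc b).mono' (by fun_prop) ?_
  refine (ae_restrict_iff' hbox).2 (Filter.Eventually.of_forall fun r hr => ?_)
  have hr0 : ∀ k, 0 < r k := fun k => (hr k (mem_univ k)).1
  have hprod : 0 ≤ ∏ k, r k ^ (d k - 1) := prod_nonneg fun k _ => rpow_nonneg (hr0 k).le _
  rw [norm_of_nonneg (mul_nonneg (rpow_nonneg (sum_nonneg fun k _ =>
    rpow_nonneg (hr0 k).le _) _) hprod)]
  calc (∑ k, r k ^ (1 / a k)) ^ (-β) * ∏ k, r k ^ (d k - 1)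
      ≤ (∏ k, r k ^ (-(β * d k / S))) * ∏ k, r k ^ (d k - 1) :=
        mul_le_mul_of_nonneg_right
          (sum_rpow_inv_rpow_neg_le_prod ha (fun k => (hd k).le) hS hβ0 hr0) hprod
    _ = ∏ k, r k ^ (d k - 1 - β * d k / S) := by
        rw [← prod_mul_distrib]
        refine prod_congr rfl fun k _ => ?_
        rw [← rpow_add (hr0 k)]
        ring_nf

end

theorem stmt16_general (p : ℕ) (a : Fin p → ℝ) (d : Fin p → ℕ)
    (ha : ∀ k, 0 < a k) (hd : ∀ k, 0 < d k) (β : ℝ) (hβ0 : 0 < β)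
    (hβ : β < ∑ k, a k * (d k : ℝ)) :
    IntegrableOn (fun r : Fin p → ℝ =>
        (∑ k, (r k) ^ (1 / a k)) ^ (-β) * ∏ k, (r k) ^ ((d k : ℝ) - 1))
      (Set.univ.pi fun _ => Set.Ioo (0:ℝ) 2) volume :=
  integrableOn_sum_rpow_inv_rpow_neg_mul_prod_rpow ha (fun k => Nat.cast_pos.2 (hd k)) hβ0.le hβ 2

theorem stmt16 (p : ℕ) (hp : 1 ≤ p) (a : Fin p → ℝ) (d : Fin p → ℕ)
    (ha : ∀ k, 0 < a k) (hd : ∀ k, 0 < d k) (β : ℝ) (hβ0 : 0 < β)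
    (hβ : β < ∑ k, a k * (d k : ℝ)) :
    IntegrableOn (fun r : Fin p → ℝ =>
        (∑ k, (r k) ^ (1 / a k)) ^ (-β) * ∏ k, (r k) ^ ((d k : ℝ) - 1))
      (Set.univ.pi fun _ => Set.Ioo (0:ℝ) 2) volume :=
  stmt16_general p a d ha hd β hβ0 hβ
end
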